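/- For all m, n ≥ 1, the polynomial F_{mn}(x,z) lies in the ideal of ℤ[x,y,z] generated by F_m(x,y) and F_n(y,z). -/

import Mathlib

/-!
Order the variables as `x, y, z` in `ℤ[x][y][z]`. Up to sign, `F_m(x,y)` is monic in `y` over
`ℤ[x]` and `F_n(y,z)` is monic in `z` over `ℤ[x][y]`, so dividing `F_{mn}(x,z)` by `F_n(y,z)` and
then the coefficients of the remainder by `F_m(x,y)` leaves a remainder `r` of degree less than
`deg F_n` in `z` and less than `deg F_m` in `y`. Specialise `x` to a transcendental `t ∈ ℂ`. Then
`t`, and every root `η` of `F_m(t,y)`, has infinite order, so `F_m(t,y)` and `F_n(η,z)` are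
separable. If `η^d = t^e` and `ζ^f = η^g` then `ζ^(df) = t^(eg)`, so `F_{mn}(t,ζ)`, and hence `r`,
vanishes at all pairs of roots `(η, ζ)`; counting roots forces `r = 0`.
-/

/-- `F m x y = ∏_{d·e = m} (x^d - y^e)`, the product over all ordered factorizations
`m = d·e` into positive integers, evaluated at elements `x y` of a commutative ring. -/
noncomputable def FPoly {R : Type*} [CommRing R] (m : ℕ) (x y : R) : R :=
  ∏ de ∈ Nat.divisorsAntidiagonal m, (x ^ de.1 - y ^ de.2)

section

open Polynomial

section CommRing

variable {R S : Type*} [CommRing R] [CommRing S]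

theorem map_FPoly {F : Type*} [FunLike F R S] [RingHomClass F R S] (φ : F) (m : ℕ) (x y : R) :
    φ (FPoly m x y) = FPoly m (φ x) (φ y) := by
  simp [FPoly, map_prod]

theorem FPoly_comm (m : ℕ) (x y : R) :
    FPoly m y x = (-1) ^ (Nat.divisorsAntidiagonal m).card * FPoly m x y := by
  rw [FPoly, FPoly, ← Finset.prod_const, ← Finset.prod_mul_distrib]
  refine Finset.prod_equiv (Equiv.prodComm ℕ ℕ)
    (fun de => Nat.swap_mem_divisorsAntidiagonal.symm) fun de _ => ?_
  simp

theorem monic_FPoly_X_C (m : ℕ) (c : R) : (FPoly m X (C c)).Monic :=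
  monic_prod_of_monic _ _ fun de hde => by
    rw [← map_pow]
    exact monic_X_pow_sub_C _
      (Nat.pos_of_mem_divisors (Nat.fst_mem_divisors_of_mem_antidiagonal hde)).ne'

theorem FPoly_eq_zero_iff [IsDomain R] {m : ℕ} {x y : R} :
    FPoly m x y = 0 ↔ ∃ de ∈ Nat.divisorsAntidiagonal m, x ^ de.1 = y ^ de.2 := by
  simp [FPoly, Finset.prod_eq_zero_iff, sub_eq_zero]

theorem FPoly_mul_eq_zero [IsDomain R] {m n : ℕ} {x y z : R} (hxy : FPoly m x y = 0)
    (hyz : FPoly n y z = 0) : FPoly (m * n) x z = 0 := by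
  obtain ⟨⟨a, b⟩, hab, hx⟩ := FPoly_eq_zero_iff.1 hxy
  obtain ⟨⟨c, d⟩, hcd, hy⟩ := FPoly_eq_zero_iff.1 hyz
  obtain ⟨rfl, hm⟩ := Nat.mem_divisorsAntidiagonal.1 hab
  obtain ⟨rfl, hn⟩ := Nat.mem_divisorsAntidiagonal.1 hcd
  refine FPoly_eq_zero_iff.2
    ⟨(a * c, b * d), Nat.mem_divisorsAntidiagonal.2 ⟨by ring, mul_ne_zero hm hn⟩, ?_⟩
  calc x ^ (a * c) = (y ^ c) ^ b := by rw [pow_mul, hx, ← pow_mul, ← pow_mul, mul_comm]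
    _ = z ^ (b * d) := by rw [hy, ← pow_mul, mul_comm]

theorem FPoly_eq_zero_comm [IsDomain R] {m : ℕ} {x y : R} :
    FPoly m y x = 0 ↔ FPoly m x y = 0 := by
  simp [FPoly_comm m x y]

theorem map_FPoly_X_C (φ : R →+* S) (m : ℕ) (c : R) :
    (FPoly m X (C c)).map φ = FPoly m X (C (φ c)) := by
  rw [← coe_mapRingHom, map_FPoly, coe_mapRingHom, map_X, map_C]

theorem isRoot_FPoly_X_C {m : ℕ} {c x : R} : (FPoly m X (C c)).IsRoot x ↔ FPoly m x c = 0 := by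
  rw [IsRoot, ← coe_evalRingHom, map_FPoly, coe_evalRingHom, eval_X, eval_C]

end CommRing

theorem Nat.eq_of_mem_divisorsAntidiagonal_of_mul_eq {m : ℕ} {p q : ℕ × ℕ}
    (hp : p ∈ Nat.divisorsAntidiagonal m) (hq : q ∈ Nat.divisorsAntidiagonal m)
    (h : p.2 * q.1 = q.2 * p.1) : p = q := by
  obtain ⟨a, b⟩ := p
  obtain ⟨c, d⟩ := q
  obtain ⟨hab, hm⟩ := Nat.mem_divisorsAntidiagonal.1 hp
  obtain ⟨hcd, -⟩ := Nat.mem_divisorsAntidiagonal.1 hq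
  dsimp only at h hab hcd
  have ha : 0 < a := Nat.pos_of_ne_zero (left_ne_zero_of_mul (hab ▸ hm))
  have hac : a = c := by
    have : a ^ 2 * m = c ^ 2 * m := by
      calc a ^ 2 * m = a * c * (d * a) := by rw [← hcd]; ring
        _ = a * c * (b * c) := by rw [h]
        _ = c ^ 2 * m := by rw [← hab]; ring
    exact Nat.pow_left_injective two_ne_zero
      (Nat.eq_of_mul_eq_mul_right (Nat.pos_of_ne_zero hm) this)
  subst hac
  rw [Nat.eq_of_mul_eq_mul_left ha (hab.trans hcd.symm)]

theorem pow_right_injective_of_pow_eq_pow {M : Type*} [Monoid M] {c x : M} {d e : ℕ}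
    (hc : Function.Injective (c ^ · : ℕ → M)) (he : e ≠ 0) (h : x ^ d = c ^ e) :
    Function.Injective (x ^ · : ℕ → M) := fun a b (hab : x ^ a = x ^ b) => by
  refine Nat.eq_of_mul_eq_mul_left (Nat.pos_of_ne_zero he) (hc ?_)
  calc c ^ (e * a) = (x ^ a) ^ d := by rw [pow_mul, ← h, ← pow_mul, ← pow_mul, mul_comm]
    _ = c ^ (e * b) := by rw [hab, ← pow_mul, mul_comm, pow_mul, h, ← pow_mul]

theorem separable_FPoly_X_C {K : Type*} [Field K] [CharZero K] [IsAlgClosed K] {c : K}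
    (hc : Function.Injective (c ^ · : ℕ → K)) (m : ℕ) : (FPoly m X (C c)).Separable := by
  have hc0 : c ≠ 0 := fun h0 => absurd (@hc 1 2 (by simp [h0])) (by norm_num)
  refine separable_prod' (fun p hp q hq hpq => ?_) fun p hp => ?_
  · rw [isCoprime_iff_aeval_ne_zero_of_isAlgClosed K K]
    intro η
    by_contra! h
    simp only [map_sub, map_pow, aeval_X, aeval_C, Algebra.algebraMap_self, RingHom.id_apply,
      sub_eq_zero] at h
    refine hpq (Nat.eq_of_mem_divisorsAntidiagonal_of_mul_eq hp hq (hc ?_))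
    calc c ^ (p.2 * q.1) = η ^ (p.1 * q.1) := by rw [pow_mul, ← h.1, ← pow_mul]
      _ = c ^ (q.2 * p.1) := by rw [mul_comm, pow_mul, h.2, ← pow_mul]
  · rw [← map_pow]
    exact separable_X_pow_sub_C _
      (Nat.cast_ne_zero.2
        (Nat.pos_of_mem_divisors (Nat.fst_mem_divisors_of_mem_antidiagonal hp)).ne')
      (pow_ne_zero _ hc0)

theorem Polynomial.Monic.map_modByMonic_eq_zero_of_isRoot {R K : Type*} [CommRing R] [Field K]
    [IsAlgClosed K] {ι : R →+* K} {f : R[X]} (hf : f.Monic) (hsep : (f.map ι).Separable)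
    {p : R[X]} (hp : ∀ η, (f.map ι).IsRoot η → p.eval₂ ι η = 0) : (p %ₘ f).map ι = 0 := by
  classical
  rw [map_modByMonic ι hf]
  refine eq_zero_of_degree_lt_of_eval_finset_eq_zero (f.map ι).roots.toFinset ?_ fun η hη => ?_
  · calc (p.map ι %ₘ f.map ι).degree < (f.map ι).degree := degree_modByMonic_lt _ (hf.map ι)
      _ ≤ (f.map ι).natDegree := degree_le_natDegree
      _ = (f.map ι).roots.toFinset.card := by
        rw [Multiset.toFinset_card_of_nodup (nodup_roots hsep),
          IsAlgClosed.card_roots_eq_natDegree]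
  · have hroot : (f.map ι).IsRoot η := (mem_roots'.1 (Multiset.mem_toFinset.1 hη)).2
    rw [modByMonic_eq_sub_mul_div, eval_sub, eval_mul, hroot.eq_zero, zero_mul,
      sub_zero, eval_map, hp η hroot]

theorem Polynomial.mem_span_C_pair_of_eval₂_eq_zero {R K : Type*} [CommRing R] [Field K]
    [IsAlgClosed K] {ι : R →+* K} (hι : Function.Injective ι) {f : R[X]} {g G : R[X][X]}
    (hf : f.Monic) (hg : g.Monic) (hfsep : (f.map ι).Separable)
    (hgsep : ∀ η, (f.map ι).IsRoot η → (g.map (eval₂RingHom ι η)).Separable)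
    (hG : ∀ η, (f.map ι).IsRoot η → ∀ ζ, (g.map (eval₂RingHom ι η)).IsRoot ζ →
      G.eval₂ (eval₂RingHom ι η) ζ = 0) :
    G ∈ Ideal.span {C f, g} := by
  have hrem (η : K) (hη : (f.map ι).IsRoot η) : (G %ₘ g).map (eval₂RingHom ι η) = 0 :=
    hg.map_modByMonic_eq_zero_of_isRoot (hgsep η hη) (hG η hη)
  have hdvd : C f ∣ G %ₘ g := by
    refine (C_dvd_iff_dvd_coeff _ _).2 fun k => ?_
    rw [← modByMonic_eq_zero_iff_dvd hf, ← Polynomial.map_eq_zero_iff hι]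
    refine hf.map_modByMonic_eq_zero_of_isRoot hfsep fun η hη => ?_
    rw [← coe_eval₂RingHom, ← coeff_map, hrem η hη, coeff_zero]
  obtain ⟨q, hq⟩ := hdvd
  exact Ideal.mem_span_pair.2
    ⟨q, G /ₘ g, by rw [mul_comm q, ← hq, mul_comm _ g, modByMonic_add_div]⟩

-- `x = C (C X)`, `y = C X`, `z = X`; the generators are `F_m(y,x)` and `F_n(z,y)`.
theorem FPoly_mul_mem_span_polynomial (m n : ℕ) :
    FPoly (m * n) (C (C X) : ℤ[X][X][X]) X ∈
      Ideal.span {C (FPoly m (X : ℤ[X][X]) (C X)), FPoly n (X : ℤ[X][X][X]) (C X)} := by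
  obtain ⟨t, ht⟩ : ∃ t : ℂ, Transcendental ℤ t :=
    ⟨_, (transcendental_algebraMap_iff (FaithfulSMul.algebraMap_injective ℝ ℂ)).2
      (transcendental_liouvilleNumber le_rfl)⟩
  set ι : ℤ[X] →+* ℂ := (aeval t).toRingHom
  have hι : Function.Injective ι := transcendental_iff_injective.1 ht
  have hιX : ι X = t := aeval_X t
  have ht_pow : Function.Injective (t ^ · : ℕ → ℂ) := fun a b hab => by
    have := @hι (X ^ a) (X ^ b) (by simpa [hιX] using hab)
    simpa using congrArg natDegree this
  refine mem_span_C_pair_of_eval₂_eq_zero hι (monic_FPoly_X_C _ _) (monic_FPoly_X_C _ _) ?_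
    (fun η hη => ?_) fun η hη ζ hζ => ?_
  · rw [map_FPoly_X_C, hιX]
    exact separable_FPoly_X_C ht_pow m
  · rw [map_FPoly_X_C, hιX, isRoot_FPoly_X_C] at hη
    rw [map_FPoly_X_C, coe_eval₂RingHom, eval₂_X]
    obtain ⟨de, hde, h⟩ := FPoly_eq_zero_iff.1 hη
    exact separable_FPoly_X_C (pow_right_injective_of_pow_eq_pow ht_pow
      (Nat.pos_of_mem_divisors (Nat.snd_mem_divisors_of_mem_antidiagonal hde)).ne' h) n
  · rw [map_FPoly_X_C, hιX, isRoot_FPoly_X_C] at hη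
    rw [map_FPoly_X_C, coe_eval₂RingHom, eval₂_X, isRoot_FPoly_X_C] at hζ
    rw [← coe_eval₂RingHom, map_FPoly]
    simpa [hιX] using FPoly_mul_eq_zero (FPoly_eq_zero_comm.1 hη) (FPoly_eq_zero_comm.1 hζ)

theorem FPoly_mul_mem_span {A : Type*} [CommRing A] (m n : ℕ) (x y z : A) :
    FPoly (m * n) x z ∈ Ideal.span {FPoly m x y, FPoly n y z} := by
  let ψ : ℤ[X][X][X] →+* A :=
    eval₂RingHom (eval₂RingHom (eval₂RingHom (Int.castRingHom A) x) y) z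
  have h := Ideal.mem_map_of_mem ψ (FPoly_mul_mem_span_polynomial m n)
  rw [Ideal.map_span, Set.image_pair, ← RingHom.comp_apply ψ C] at h
  simp only [map_FPoly] at h
  simp only [ψ, RingHom.comp_apply, coe_eval₂RingHom, eval₂_C, eval₂_X] at h
  rwa [FPoly_comm m x y, FPoly_comm n y z, Ideal.span_insert,
    Ideal.span_singleton_mul_left_unit (isUnit_neg_one.pow _),
    Ideal.span_singleton_mul_left_unit (isUnit_neg_one.pow _), ← Ideal.span_insert] at h

end

open MvPolynomial in
theorem stmt_10_general (m n : ℕ) :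
    FPoly (m * n) (X 0) (X 2) ∈
      Ideal.span ({FPoly m (X 0) (X 1), FPoly n (X 1) (X 2)} :
        Set (MvPolynomial (Fin 3) ℤ)) :=
  FPoly_mul_mem_span m n _ _ _

open MvPolynomial in
theorem stmt_10 (m n : ℕ) (hm : 1 ≤ m) (hn : 1 ≤ n) :
    FPoly (m * n) (X 0) (X 2) ∈
      Ideal.span ({FPoly m (X 0) (X 1), FPoly n (X 1) (X 2)} :
        Set (MvPolynomial (Fin 3) ℤ)) :=
  stmt_10_general m n
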